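/- arXiv:2111.10469 — 2 statements merged into one kernel-verified Lean document; each statement's English description precedes it below -/
import Mathlib

section
/- Let G be a vertex-minimal graph among triangle-free, fork-free graphs with chromatic number at least 4. Then for any two vertices u, v of G, the neighborhood of v is not a subset of the neighborhood of u. -/
open SimpleGraph

/-- The fork: `K_{1,4}` with two edges subdivided. Vertex 0 is the center,
adjacent to leaves 1, 2 and to 3, 5; paths 0-3-4 and 0-5-6. -/
def fork : SimpleGraph (Fin 7) :=
  SimpleGraph.fromEdgeSet {s(0, 1), s(0, 2), s(0, 3), s(0, 5), s(3, 4), s(5, 6)}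

/-- A graph is fork-free if it has no induced subgraph isomorphic to the fork. -/
def ForkFree {V : Type} (G : SimpleGraph V) : Prop :=
  IsEmpty (fork ↪g G)

/-- `G` is a vertex-minimal triangle-free, fork-free graph with chromatic
number at least 4: every smaller triangle-free fork-free graph is 3-colorable. -/
def MinCex {V : Type} [Fintype V] (G : SimpleGraph V) : Prop :=
  G.CliqueFree 3 ∧ ForkFree G ∧ 4 ≤ G.chromaticNumber ∧
    ∀ (W : Type) [Fintype W] (H : SimpleGraph W),
      Fintype.card W < Fintype.card V → H.CliqueFree 3 → ForkFree H →
        H.chromaticNumber ≤ 3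

theorem minCex_no_neighborhood_containment {V : Type} [Fintype V]
    (G : SimpleGraph V) (hG : MinCex G) (u v : V) (huv : u ≠ v) :
    ¬ (G.neighborSet v ⊆ G.neighborSet u) := by
  classical
  intro hsub
  obtain ⟨htf, hff, hchi, hmin⟩ := hG
  set s : Set V := {x | x ≠ v} with hs
  let H := G.induce s
  have emb : H ↪g G := SimpleGraph.Embedding.induce s
  have hcard : Fintype.card s < Fintype.card V :=
    Fintype.card_subtype_lt (x := v) (fun h => h rfl)
  have Htf : H.CliqueFree 3 := CliqueFree.comap emb.isContained htf
  have Hff : ForkFree H := ⟨fun f => hff.false (emb.comp f)⟩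
  have Hchrom : H.chromaticNumber ≤ 3 := hmin s H hcard Htf Hff
  have Hcol : H.Colorable 3 :=
    SimpleGraph.chromaticNumber_le_iff_colorable.mp (by exact_mod_cast Hchrom)
  obtain ⟨c⟩ := Hcol
  have hu : u ∈ s := huv
  -- extend the coloring
  have Gcol : G.Colorable 3 := by
    refine ⟨SimpleGraph.Coloring.mk
      (fun x => if hx : x = v then c ⟨u, hu⟩ else c ⟨x, hx⟩) ?_⟩
    intro x y hxy
    have hne : x ≠ y := hxy.ne
    by_cases hx : x = v
    · have hyv : y ≠ v := fun h => hne (hx.trans h.symm)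
      have hadj : G.Adj u y := by rw [hx] at hxy; exact hsub hxy
      have hH : H.Adj ⟨u, hu⟩ ⟨y, hyv⟩ := hadj
      simpa [hx, hyv] using c.valid hH
    · by_cases hy : y = v
      · have hadj : G.Adj u x := by rw [hy] at hxy; exact hsub hxy.symm
        have hH : H.Adj ⟨x, hx⟩ ⟨u, hu⟩ := hadj.symm
        simpa [hx, hy] using c.valid hH
      · have : H.Adj ⟨x, hx⟩ ⟨y, hy⟩ := hxy
        simpa [hx, hy] using c.valid this
  have : G.chromaticNumber ≤ 3 := Gcol.chromaticNumber_le
  have : (4 : ℕ∞) ≤ 3 := le_trans hchi this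
  norm_num at this
end

section
/- Let G be a triangle-free, fork-free graph containing a 5-cycle C = v1 v2 v3 v4 v5 v1 such that every vertex outside C has at most one neighbor on C. Then for any index i (mod 5), any vertex a adjacent to v_{i+1} but not on C, and any two distinct vertices a_i, b_i adjacent to v_i but not on C, a is adjacent to at least one of a_i, b_i. -/
open SimpleGraph

/-- `c` describes a 5-cycle in `G`. -/
def IsC5 {V : Type} (G : SimpleGraph V) (c : Fin 5 → V) : Prop :=
  Function.Injective c ∧ ∀ i : Fin 5, G.Adj (c i) (c (i + 1))

/-- Distance from a vertex `u` to the 5-cycle `c`. -/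
noncomputable def distC {V : Type} (G : SimpleGraph V) (c : Fin 5 → V) (u : V) : ℕ :=
  Finset.univ.inf' Finset.univ_nonempty fun i => G.dist u (c i)

private lemma F01 : fork.Adj 0 1 := by simp [fork]
private lemma F02 : fork.Adj 0 2 := by simp [fork]
private lemma F03 : fork.Adj 0 3 := by simp [fork]
private lemma F05 : fork.Adj 0 5 := by simp [fork]
private lemma F10 : fork.Adj 1 0 := by simp [fork]
private lemma F20 : fork.Adj 2 0 := by simp [fork]
private lemma F30 : fork.Adj 3 0 := by simp [fork]
private lemma F34 : fork.Adj 3 4 := by simp [fork]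
private lemma F43 : fork.Adj 4 3 := by simp [fork]
private lemma F50 : fork.Adj 5 0 := by simp [fork]
private lemma F56 : fork.Adj 5 6 := by simp [fork]
private lemma F65 : fork.Adj 6 5 := by simp [fork]
private lemma NF00 : ¬ fork.Adj 0 0 := by simp [fork]
private lemma NF04 : ¬ fork.Adj 0 4 := by simp [fork]
private lemma NF06 : ¬ fork.Adj 0 6 := by simp [fork]
private lemma NF11 : ¬ fork.Adj 1 1 := by simp [fork]
private lemma NF12 : ¬ fork.Adj 1 2 := by simp [fork]
private lemma NF13 : ¬ fork.Adj 1 3 := by simp [fork]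
private lemma NF14 : ¬ fork.Adj 1 4 := by simp [fork]
private lemma NF15 : ¬ fork.Adj 1 5 := by simp [fork]
private lemma NF16 : ¬ fork.Adj 1 6 := by simp [fork]
private lemma NF21 : ¬ fork.Adj 2 1 := by simp [fork]
private lemma NF22 : ¬ fork.Adj 2 2 := by simp [fork]
private lemma NF23 : ¬ fork.Adj 2 3 := by simp [fork]
private lemma NF24 : ¬ fork.Adj 2 4 := by simp [fork]
private lemma NF25 : ¬ fork.Adj 2 5 := by simp [fork]
private lemma NF26 : ¬ fork.Adj 2 6 := by simp [fork]
private lemma NF31 : ¬ fork.Adj 3 1 := by simp [fork]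
private lemma NF32 : ¬ fork.Adj 3 2 := by simp [fork]
private lemma NF33 : ¬ fork.Adj 3 3 := by simp [fork]
private lemma NF35 : ¬ fork.Adj 3 5 := by simp [fork]
private lemma NF36 : ¬ fork.Adj 3 6 := by simp [fork]
private lemma NF40 : ¬ fork.Adj 4 0 := by simp [fork]
private lemma NF41 : ¬ fork.Adj 4 1 := by simp [fork]
private lemma NF42 : ¬ fork.Adj 4 2 := by simp [fork]
private lemma NF44 : ¬ fork.Adj 4 4 := by simp [fork]
private lemma NF45 : ¬ fork.Adj 4 5 := by simp [fork]
private lemma NF46 : ¬ fork.Adj 4 6 := by simp [fork]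
private lemma NF51 : ¬ fork.Adj 5 1 := by simp [fork]
private lemma NF52 : ¬ fork.Adj 5 2 := by simp [fork]
private lemma NF53 : ¬ fork.Adj 5 3 := by simp [fork]
private lemma NF54 : ¬ fork.Adj 5 4 := by simp [fork]
private lemma NF55 : ¬ fork.Adj 5 5 := by simp [fork]
private lemma NF60 : ¬ fork.Adj 6 0 := by simp [fork]
private lemma NF61 : ¬ fork.Adj 6 1 := by simp [fork]
private lemma NF62 : ¬ fork.Adj 6 2 := by simp [fork]
private lemma NF63 : ¬ fork.Adj 6 3 := by simp [fork]
private lemma NF64 : ¬ fork.Adj 6 4 := by simp [fork]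
private lemma NF66 : ¬ fork.Adj 6 6 := by simp [fork]

set_option maxHeartbeats 1600000 in
set_option maxRecDepth 4000 in
theorem matching_between_neighborhoods {V : Type} [Fintype V]
    (G : SimpleGraph V) (h1 : G.CliqueFree 3) (h2 : ForkFree G)
    (c : Fin 5 → V) (hc : IsC5 G c)
    (hone : ∀ x : V, x ∉ Set.range c →
      {y : V | y ∈ Set.range c ∧ G.Adj x y}.ncard ≤ 1)
    (i : Fin 5) (a ai bi : V)
    (ha : G.Adj (c (i + 1)) a) (hac : a ∉ Set.range c)
    (hai : G.Adj (c i) ai) (haic : ai ∉ Set.range c)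
    (hbi : G.Adj (c i) bi) (hbic : bi ∉ Set.range c) (hne : ai ≠ bi) :
    G.Adj a ai ∨ G.Adj a bi := by
  classical
  by_contra hcon
  push_neg at hcon
  obtain ⟨hnai, hnbi⟩ := hcon
  obtain ⟨cinj, cadj⟩ := hc
  -- triangle-free helper
  have htri : ∀ x y z : V, G.Adj x y → G.Adj y z → ¬ G.Adj x z := by
    intro x y z hxy hyz hxz
    exact h1 {x, y, z} (is3Clique_triple_iff.mpr ⟨hxy, hxz, hyz⟩)
  -- unique neighbor helper
  have huniq : ∀ x : V, x ∉ Set.range c → ∀ j k : Fin 5, j ≠ k →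
      G.Adj x (c j) → ¬ G.Adj x (c k) := by
    intro x hx j k hjk hj hk
    have hsub : ({c j, c k} : Set V) ⊆ {y : V | y ∈ Set.range c ∧ G.Adj x y} := by
      rintro y (rfl | rfl)
      · exact ⟨⟨j, rfl⟩, hj⟩
      · exact ⟨⟨k, rfl⟩, hk⟩
    have h2' : ({c j, c k} : Set V).ncard = 2 := Set.ncard_pair (fun h => hjk (cinj h))
    have hle := Set.ncard_le_ncard hsub (Set.toFinite _)
    have := hone x hx
    omega
  have hadd : ∀ d e : Fin 5, d ≠ e → i + d ≠ i + e := fun d e hde h => hde (by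
    exact add_left_cancel h)
  have hi0 : i + 0 = i := add_zero i
  have e41 : (4:Fin 5) + 1 = 0 := by decide
  have e31 : (3:Fin 5) + 1 = 4 := by decide
  have e21 : (2:Fin 5) + 1 = 3 := by decide
  have e11 : (1:Fin 5) + 1 = 2 := by decide
  have hi5 : i + 4 + 1 = i := by rw [add_assoc, e41, add_zero]
  have hi45 : i + 3 + 1 = i + 4 := by rw [add_assoc, e31]
  -- adjacencies
  have A03 : G.Adj (c i) (c (i + 4)) := by have := cadj (i + 4); rw [hi5] at this; exact this.symm
  have A34 : G.Adj (c (i + 4)) (c (i + 3)) := by have := cadj (i + 3); rw [hi45] at this; exact this.symm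
  have A05 : G.Adj (c i) (c (i + 1)) := cadj i
  have A45 : G.Adj (c (i+1)) (c (i+2)) := by
    have := cadj (i+1); rwa [add_assoc, e11] at this
  have A4' : G.Adj (c (i+2)) (c (i+3)) := by
    have := cadj (i + 2); rwa [add_assoc, e21] at this
  -- non-adjacencies
  have N04 : ¬ G.Adj (c i) (c (i + 3)) := fun h => htri (c (i+3)) (c (i+4)) (c i) A34.symm A03.symm h.symm
  have N35 : ¬ G.Adj (c (i+4)) (c (i+1)) := htri (c (i+4)) (c i) (c (i+1)) A03.symm A05
  have N45 : ¬ G.Adj (c (i+3)) (c (i+1)) := fun h => htri (c (i+1)) (c (i+2)) (c (i+3)) A45 A4' h.symm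
  have N12 : ¬ G.Adj ai bi := htri ai (c i) bi hai.symm hbi
  have ne_i4 : i ≠ i + 4 := fun h => hadd 0 4 (by decide) (by rwa [add_zero])
  have ne_i3 : i ≠ i + 3 := fun h => hadd 0 3 (by decide) (by rwa [add_zero])
  have ne_i1 : i ≠ i + 1 := fun h => hadd 0 1 (by decide) (by rwa [add_zero])
  have ne_14 : i + 1 ≠ i + 4 := hadd 1 4 (by decide)
  have ne_13 : i + 1 ≠ i + 3 := hadd 1 3 (by decide)
  have ne_1i : i + 1 ≠ i := ne_i1.symm
  have N13 : ¬ G.Adj ai (c (i+4)) := huniq ai haic i (i+4) ne_i4 hai.symm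
  have N14 : ¬ G.Adj ai (c (i+3)) := huniq ai haic i (i+3) ne_i3 hai.symm
  have N15 : ¬ G.Adj ai (c (i+1)) := huniq ai haic i (i+1) ne_i1 hai.symm
  have N23 : ¬ G.Adj bi (c (i+4)) := huniq bi hbic i (i+4) ne_i4 hbi.symm
  have N24 : ¬ G.Adj bi (c (i+3)) := huniq bi hbic i (i+3) ne_i3 hbi.symm
  have N25 : ¬ G.Adj bi (c (i+1)) := huniq bi hbic i (i+1) ne_i1 hbi.symm
  have N06 : ¬ G.Adj (c i) a := fun h => huniq a hac (i+1) i ne_1i ha.symm h.symm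
  have N36 : ¬ G.Adj (c (i+4)) a := fun h => huniq a hac (i+1) (i+4) ne_14 ha.symm h.symm
  have N46 : ¬ G.Adj (c (i+3)) a := fun h => huniq a hac (i+1) (i+3) ne_13 ha.symm h.symm
  -- distinctness
  have d03 : c i ≠ c (i+4) := fun h => ne_i4 (cinj h)
  have d04 : c i ≠ c (i+3) := fun h => ne_i3 (cinj h)
  have d05 : c i ≠ c (i+1) := fun h => ne_i1 (cinj h)
  have d34 : c (i+4) ≠ c (i+3) := fun h => hadd 4 3 (by decide) (cinj h)
  have d35 : c (i+4) ≠ c (i+1) := fun h => hadd 4 1 (by decide) (cinj h)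
  have d45 : c (i+3) ≠ c (i+1) := fun h => hadd 3 1 (by decide) (cinj h)
  have nra : ∀ j : Fin 5, a ≠ c j := fun j h => hac ⟨j, h.symm⟩
  have nrai : ∀ j : Fin 5, ai ≠ c j := fun j h => haic ⟨j, h.symm⟩
  have nrbi : ∀ j : Fin 5, bi ≠ c j := fun j h => hbic ⟨j, h.symm⟩
  have dai : a ≠ ai := fun h => huniq a hac (i+1) i ne_1i ha.symm (h ▸ hai.symm)
  have dbi : a ≠ bi := fun h => huniq a hac (i+1) i ne_1i ha.symm (h ▸ hbi.symm)
  let f : Fin 7 → V := ![c i, ai, bi, c (i+4), c (i+3), c (i+1), a]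
  have finj : Function.Injective f := by
    intro j k h
    fin_cases j <;> fin_cases k <;>
      first
        | rfl
        | exact absurd h (by first | exact d03 | exact d03.symm | exact d04 | exact d04.symm | exact d05 | exact d05.symm | exact d34 | exact d34.symm | exact d35 | exact d35.symm | exact d45 | exact d45.symm | exact nra _ | exact (nra _).symm | exact nrai _ | exact (nrai _).symm | exact nrbi _ | exact (nrbi _).symm | exact hne | exact hne.symm | exact dai | exact dai.symm | exact dbi | exact dbi.symm)
  refine h2.false ⟨⟨f, finj⟩, ?_⟩
  intro j k
  fin_cases j <;> fin_cases k <;> constructor <;> intro hx <;>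
    first
      | exact F01 | exact F02 | exact F03 | exact F05 | exact F10 | exact F20 | exact F30 | exact F34 | exact F43 | exact F50 | exact F56 | exact F65 | exact hai | exact hai.symm | exact hbi | exact hbi.symm | exact A03 | exact A03.symm | exact A05 | exact A05.symm | exact A34 | exact A34.symm | exact ha | exact ha.symm
      | (exfalso; first | exact NF00 hx | exact NF04 hx | exact NF06 hx | exact NF11 hx | exact NF12 hx | exact NF13 hx | exact NF14 hx | exact NF15 hx | exact NF16 hx | exact NF21 hx | exact NF22 hx | exact NF23 hx | exact NF24 hx | exact NF25 hx | exact NF26 hx | exact NF31 hx | exact NF32 hx | exact NF33 hx | exact NF35 hx | exact NF36 hx | exact NF40 hx | exact NF41 hx | exact NF42 hx | exact NF44 hx | exact NF45 hx | exact NF46 hx | exact NF51 hx | exact NF52 hx | exact NF53 hx | exact NF54 hx | exact NF55 hx | exact NF60 hx | exact NF61 hx | exact NF62 hx | exact NF63 hx | exact NF64 hx | exact NF66 hx | exact N04 hx | exact N04 hx.symm | exact N06 hx | exact N06 hx.symm | exact N12 hx | exact N12 hx.symm | exact N13 hx | exact N13 hx.symm | exact N14 hx | exact N14 hx.symm | exact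 N15 hx | exact N15 hx.symm | exact N23 hx | exact N23 hx.symm | exact N24 hx | exact N24 hx.symm | exact N25 hx | exact N25 hx.symm | exact N35 hx | exact N35 hx.symm | exact N36 hx | exact N36 hx.symm | exact N45 hx | exact N45 hx.symm | exact N46 hx | exact N46 hx.symm | exact hnai hx | exact hnai hx.symm | exact hnbi hx | exact hnbi hx.symm | exact G.irrefl hx)
end
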